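/- Let E_y(x) = ∑_{j=0}^{2⌈y⌉} x^j/j! be the truncated exponential. For real x with |x| ≤ y/10 and y ≥ 1, one has e^{2x} ≤ C |E_y(x)|^2 for an absolute constant C. -/

import Mathlib

open Finset

/-- The truncated exponential `E_y(x) = ∑_{j=0}^{2⌈y⌉} x^j/j!`. -/
noncomputable def truncExp (y x : ℝ) : ℝ :=
  ∑ j ∈ Finset.range (2 * ⌈y⌉₊ + 1), x ^ j / (j.factorial : ℝ)

lemma exp_eq_tsum_real (x : ℝ) : Real.exp x = ∑' j : ℕ, x ^ j / (j.factorial : ℝ) := by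
  rw [Real.exp_eq_exp_ℝ, NormedSpace.exp_eq_tsum_div]

/-- The tail of the exponential series is bounded by `|x|^N/N! * e^{|x|}`. -/
lemma exp_tail_bound (x : ℝ) (N : ℕ) :
    |Real.exp x - ∑ j ∈ Finset.range N, x ^ j / (j.factorial : ℝ)|
      ≤ |x| ^ N / (N.factorial : ℝ) * Real.exp |x| := by
  have hsum := Real.summable_pow_div_factorial x
  have hkey := Summable.sum_add_tsum_nat_add N hsum
  have hx : Real.exp x - ∑ j ∈ Finset.range N, x ^ j / (j.factorial : ℝ)
      = ∑' i : ℕ, x ^ (i + N) / ((i + N).factorial : ℝ) := by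
    rw [exp_eq_tsum_real, ← hkey]; ring
  rw [hx]
  have habs : Summable (fun i : ℕ => |x| ^ (i + N) / ((i + N).factorial : ℝ)) :=
    (Real.summable_pow_div_factorial |x|).comp_injective (add_left_injective N)
  have habs' : Summable fun i : ℕ => ‖x ^ (i + N) / ((i + N).factorial : ℝ)‖ := by
    simpa [Real.norm_eq_abs, abs_div, abs_pow, Nat.abs_cast] using habs
  have h1 := norm_tsum_le_tsum_norm habs'
  simp only [Real.norm_eq_abs, abs_div, abs_pow, Nat.abs_cast] at h1
  refine h1.trans ?_
  have hsum2 : Summable (fun i : ℕ => |x| ^ N / (N.factorial : ℝ) * (|x| ^ i / (i.factorial : ℝ))) :=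
    (Real.summable_pow_div_factorial |x|).mul_left _
  have hterm : ∀ i : ℕ, |x| ^ (i + N) / ((i + N).factorial : ℝ)
      ≤ |x| ^ N / (N.factorial : ℝ) * (|x| ^ i / (i.factorial : ℝ)) := by
    intro i
    rw [pow_add, div_mul_div_comm]
    rw [mul_comm (|x| ^ N) _]  -- |x|^i * |x|^N
    apply div_le_div_of_nonneg_left
    · positivity
    · positivity
    · have : (N.factorial * i.factorial : ℕ) ≤ (i + N).factorial := by
        have := Nat.factorial_mul_factorial_dvd_factorial_add i N
        exact Nat.le_of_dvd (Nat.factorial_pos _) (by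
          rwa [mul_comm] at this)
      calc ((N.factorial : ℝ) * i.factorial) = ((N.factorial * i.factorial : ℕ) : ℝ) := by
            push_cast; ring
        _ ≤ ((i + N).factorial : ℝ) := by exact_mod_cast this
  calc ∑' i : ℕ, |x| ^ (i + N) / ((i + N).factorial : ℝ)
      ≤ ∑' i : ℕ, |x| ^ N / (N.factorial : ℝ) * (|x| ^ i / (i.factorial : ℝ)) :=
        Summable.tsum_le_tsum hterm habs hsum2
    _ = |x| ^ N / (N.factorial : ℝ) * Real.exp |x| := by
        rw [tsum_mul_left, ← exp_eq_tsum_real]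

lemma one_div_factorial_le (N : ℕ) (hN : 0 < N) :
    (1 : ℝ) / (N.factorial : ℝ) ≤ (Real.exp 1 / N) ^ N := by
  have hNpos : (0 : ℝ) < N := by exact_mod_cast hN
  have h1 : (N : ℝ) ^ N / (N.factorial : ℝ) ≤ Real.exp N := by
    rw [exp_eq_tsum_real]
    refine Summable.le_tsum (Real.summable_pow_div_factorial _) N (fun i _ => by positivity)
  have h2 : Real.exp (N : ℝ) = Real.exp 1 ^ N := by
    rw [← Real.exp_nat_mul, mul_one]
  rw [div_le_iff₀ (by positivity : (0:ℝ) < (N.factorial : ℝ)), h2] at h1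
  rw [div_pow, div_le_div_iff₀ (by positivity) (by positivity : (0:ℝ) < (N:ℝ) ^ N), one_mul]
  linarith
  
/-- For real `x` with `|x| ≤ y/10` and `y ≥ 1`, one has `e^{2x} ≤ C |E_y(x)|^2`
for an absolute constant `C`: the truncated exponential approximates `e^x` up to
a bounded multiplicative factor on this range. -/
theorem exp_le_truncExp_sq :
    ∃ C : ℝ, 0 < C ∧ ∀ y x : ℝ, 1 ≤ y → |x| ≤ y / 10 →
      Real.exp (2 * x) ≤ C * |truncExp y x| ^ 2 := by
  refine ⟨4, by norm_num, ?_⟩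
  intro y x hy hx
  set N : ℕ := 2 * ⌈y⌉₊ + 1 with hNdef
  have hyceil : y ≤ (⌈y⌉₊ : ℝ) := Nat.le_ceil y
  have hN3 : 3 ≤ N := by
    have : 1 ≤ ⌈y⌉₊ := Nat.one_le_ceil_iff.mpr (by linarith)
    omega
  have hNpos : (0 : ℝ) < N := by positivity
  have hNx : 20 * |x| ≤ (N : ℝ) := by
    have h2y : 2 * y ≤ (N : ℝ) := by
      have : (2 * ⌈y⌉₊ : ℝ) ≤ N := by rw [hNdef]; push_cast; linarith
      push_cast at this ⊢; linarith
    linarith [hx]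
  have hxabs : (0:ℝ) ≤ |x| := abs_nonneg x
  -- key smallness: (e|x|/N)^N * e^{2|x|} ≤ 1/2
  have hsmall : (Real.exp 1 * |x| / N) ^ N * Real.exp (2 * |x|) ≤ 1 / 2 := by
    have he1 : Real.exp 1 ≤ 2.7182818286 := Real.exp_one_lt_d9.le
    have hbase : Real.exp 1 * |x| / N ≤ Real.exp 1 / 20 := by
      rw [div_le_div_iff₀ hNpos (by norm_num)]
      have : Real.exp 1 * (20 * |x|) ≤ Real.exp 1 * N :=
        mul_le_mul_of_nonneg_left hNx (Real.exp_pos 1).le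
      linarith
    have hexp : Real.exp (2 * |x|) ≤ Real.exp ((1:ℝ)/10) ^ N := by
      rw [← Real.exp_nat_mul]
      apply Real.exp_le_exp.mpr
      have : 2 * |x| ≤ (N : ℝ) / 10 := by linarith
      calc 2 * |x| ≤ (N : ℝ) / 10 := this
        _ = (N : ℝ) * (1/10) := by ring
    have hb0 : (0:ℝ) ≤ Real.exp 1 * |x| / N := by positivity
    calc (Real.exp 1 * |x| / N) ^ N * Real.exp (2 * |x|)
        ≤ (Real.exp 1 / 20) ^ N * Real.exp ((1:ℝ)/10) ^ N := by
          apply mul_le_mul (pow_le_pow_left₀ hb0 hbase N) hexp (Real.exp_pos _).le (by positivity)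
      _ = (Real.exp 1 / 20 * Real.exp ((1:ℝ)/10)) ^ N := by rw [mul_pow]
      _ ≤ (1/2 : ℝ) ^ N := by
          apply pow_le_pow_left₀ (by positivity)
          have h10 : Real.exp ((1:ℝ)/10) ≤ Real.exp 1 := Real.exp_le_exp.mpr (by norm_num)
          nlinarith [Real.exp_pos ((1:ℝ)/10), Real.exp_pos 1]
      _ ≤ (1/2 : ℝ) ^ 1 := by
          apply pow_le_pow_of_le_one (by norm_num) (by norm_num)
          omega
      _ = 1/2 := by norm_num
  -- tail bound
  have htail : |Real.exp x - truncExp y x| ≤ 1/2 * Real.exp (-|x|) := by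
    have h1 := exp_tail_bound x N
    have h2 : |x| ^ N / (N.factorial : ℝ) ≤ (Real.exp 1 * |x| / N) ^ N := by
      have := one_div_factorial_le N (by omega)
      calc |x| ^ N / (N.factorial : ℝ) = |x| ^ N * (1 / (N.factorial : ℝ)) := by ring
        _ ≤ |x| ^ N * (Real.exp 1 / N) ^ N := by
            apply mul_le_mul_of_nonneg_left this (by positivity)
        _ = (Real.exp 1 * |x| / N) ^ N := by rw [← mul_pow]; congr 1; ring
    have h3 : (Real.exp 1 * |x| / N) ^ N * Real.exp |x| ≤ 1/2 * Real.exp (-|x|) := by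
      have hsplit : Real.exp |x| = Real.exp (2 * |x|) * Real.exp (-|x|) := by
        rw [← Real.exp_add]; ring_nf
      calc (Real.exp 1 * |x| / N) ^ N * Real.exp |x|
          = ((Real.exp 1 * |x| / N) ^ N * Real.exp (2 * |x|)) * Real.exp (-|x|) := by
            rw [hsplit]; ring
        _ ≤ 1/2 * Real.exp (-|x|) :=
            mul_le_mul_of_nonneg_right hsmall (Real.exp_pos _).le
    have : truncExp y x = ∑ j ∈ Finset.range N, x ^ j / (j.factorial : ℝ) := rfl
    rw [this]
    refine h1.trans (le_trans ?_ h3)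
    exact mul_le_mul_of_nonneg_right h2 (Real.exp_pos _).le
  -- conclude
  have hexpx : Real.exp (-|x|) ≤ Real.exp x := Real.exp_le_exp.mpr (neg_abs_le x)
  have hE : Real.exp x / 2 ≤ truncExp y x := by
    have := abs_le.mp htail
    have h' : Real.exp x - truncExp y x ≤ 1/2 * Real.exp (-|x|) := this.2
    nlinarith [Real.exp_pos x]
  have hEpos : 0 < truncExp y x := lt_of_lt_of_le (by positivity) hE
  have habs : |truncExp y x| = truncExp y x := abs_of_pos hEpos
  rw [habs]
  have : Real.exp (2 * x) = (Real.exp x) ^ 2 := by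
    rw [← Real.exp_nat_mul]; norm_num
  rw [this]
  nlinarith [Real.exp_pos x, hE, hEpos]
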